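/- For every constant c > 0 there exist a, b ∈ (0,1) such that I(b) − I(a) − I′(b)(b − a) + (c/2) I″(b)(a − b)² < 0. In other words, the two-point inequality I(b) − I(a) − I′(b)(b − a) ≥ (c/2)(−I″(b))(a − b)² fails to hold for all pairs a, b ∈ (0,1), no matter how small c > 0 is chosen. -/

import Mathlib

/-- The standard Gaussian distribution function `Φ(x) = (2π)^{-1/2} ∫_{-∞}^x e^{-y²/2} dy`. -/
noncomputable def stdGaussCDF (x : ℝ) : ℝ :=
  ∫ y in Set.Iic x, Real.exp (-y ^ 2 / 2) / Real.sqrt (2 * Real.pi)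

/-- The Gaussian isoperimetric profile `I = φ ∘ Φ⁻¹` on `[0,1]`, with `I(0) = I(1) = 0`. -/
noncomputable def gaussI (p : ℝ) : ℝ :=
  if p = 0 ∨ p = 1 then 0
  else Real.exp (-(Function.invFun stdGaussCDF p) ^ 2 / 2) / Real.sqrt (2 * Real.pi)

/-!
Along `b = Φ(t)` the profile is explicit: `I(b) = φ(t)`, `I′(b) = -t` and, since `I′ = -Φ⁻¹`,
`I″(b) = -1/φ(t)`. Take `a = 1/2` and let `t → ∞`: the first-order part
`I(b) - I(a) - I′(b)(b - a)` is at most of order `t`, whereas the curvature term is about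
`-c/(8φ(t))`, and `t φ(t) → 0`.
-/

open MeasureTheory ProbabilityTheory Real Set Filter Topology Function

noncomputable def stdGaussPDF (x : ℝ) : ℝ := exp (-x ^ 2 / 2) / √(2 * π)

lemma stdGaussPDF_pos (x : ℝ) : 0 < stdGaussPDF x := by
  unfold stdGaussPDF
  positivity

lemma stdGaussPDF_le_one (x : ℝ) : stdGaussPDF x ≤ 1 := by
  unfold stdGaussPDF
  rw [div_le_one (by positivity)]
  calc exp (-x ^ 2 / 2) ≤ 1 := exp_le_one_iff.2 (by nlinarith [sq_nonneg x])
    _ ≤ √(2 * π) := one_le_sqrt.2 (by linarith [pi_gt_three])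

lemma gaussianPDFReal_zero_one : gaussianPDFReal 0 1 = stdGaussPDF := by
  ext x
  simp [gaussianPDFReal, stdGaussPDF, div_eq_inv_mul]

lemma hasDerivAt_stdGaussPDF (x : ℝ) : HasDerivAt stdGaussPDF (-x * stdGaussPDF x) x := by
  have hexponent : HasDerivAt (fun y : ℝ => -y ^ 2 / 2) (-x) x :=
    ((hasDerivAt_pow 2 x).fun_neg.div_const 2).congr_deriv (by ring)
  refine (hexponent.exp.div_const (√(2 * π))).congr_deriv ?_
  rw [stdGaussPDF]
  ring

lemma tendsto_mul_stdGaussPDF_atTop : Tendsto (fun x => x * stdGaussPDF x) atTop (𝓝 0) := by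
  have h := ((tendsto_rpow_abs_mul_exp_neg_mul_sq_cocompact (a := 1 / 2) (by norm_num) 1).mono_left
    atTop_le_cocompact).div_const (√(2 * π))
  rw [zero_div] at h
  refine h.congr' ?_
  filter_upwards [eventually_ge_atTop 0] with x hx
  simp only [stdGaussPDF, abs_of_nonneg hx, rpow_one, mul_div_assoc]
  ring_nf

lemma stdGaussCDF_eq_integral (x : ℝ) : stdGaussCDF x = ∫ y in Iic x, stdGaussPDF y := rfl

lemma stdGaussCDF_eq_cdf : stdGaussCDF = cdf (gaussianReal 0 1) := by
  ext x
  rw [cdf_eq_real, measureReal_def, gaussianReal_apply_eq_integral _ one_ne_zero,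
    ENNReal.toReal_ofReal (integral_nonneg (gaussianPDFReal_nonneg 0 1)), gaussianPDFReal_zero_one]
  rfl

lemma tendsto_stdGaussCDF_atBot : Tendsto stdGaussCDF atBot (𝓝 0) :=
  stdGaussCDF_eq_cdf ▸ tendsto_cdf_atBot _

lemma tendsto_stdGaussCDF_atTop : Tendsto stdGaussCDF atTop (𝓝 1) :=
  stdGaussCDF_eq_cdf ▸ tendsto_cdf_atTop _

lemma hasDerivAt_stdGaussCDF (x : ℝ) : HasDerivAt stdGaussCDF (stdGaussPDF x) x := by
  have hi : Integrable stdGaussPDF := gaussianPDFReal_zero_one ▸ integrable_gaussianPDFReal 0 1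
  have h : stdGaussCDF = fun y => stdGaussCDF 0 + ∫ t in (0 : ℝ)..y, stdGaussPDF t := by
    ext y
    simp only [stdGaussCDF_eq_integral]
    rw [← intervalIntegral.integral_Iic_sub_Iic hi.integrableOn hi.integrableOn, add_sub_cancel]
  rw [h]
  exact (intervalIntegral.integral_hasDerivAt_right hi.intervalIntegrable
    hi.aestronglyMeasurable.stronglyMeasurableAtFilter
    ((hasDerivAt_stdGaussPDF x).continuousAt)).const_add _

lemma strictMono_stdGaussCDF : StrictMono stdGaussCDF :=
  strictMono_of_deriv_pos fun x => (hasDerivAt_stdGaussCDF x).deriv ▸ stdGaussPDF_pos x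

lemma range_stdGaussCDF : range stdGaussCDF = Ioo 0 1 := by
  have hmono := strictMono_stdGaussCDF
  ext p
  constructor
  · rintro ⟨x, rfl⟩
    exact ⟨(hmono.monotone.le_of_tendsto tendsto_stdGaussCDF_atBot (x - 1)).trans_lt
        (hmono (sub_one_lt x)),
      (hmono (lt_add_one x)).trans_le (hmono.monotone.ge_of_tendsto tendsto_stdGaussCDF_atTop _)⟩
  · rintro ⟨h0, h1⟩
    exact mem_range_of_exists_le_of_exists_ge
      (continuous_iff_continuousAt.2 fun x => (hasDerivAt_stdGaussCDF x).continuousAt)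
      (tendsto_stdGaussCDF_atBot.eventually (eventually_le_nhds h0)).exists
      (tendsto_stdGaussCDF_atTop.eventually (eventually_ge_nhds h1)).exists

theorem StrictMono.hasDerivAt_invFun {f : ℝ → ℝ} {f' x : ℝ} (hf : StrictMono f)
    (hderiv : HasDerivAt f f' x) (hf' : f' ≠ 0) (hrange : range f ∈ 𝓝 (f x)) :
    HasDerivAt (invFun f) f'⁻¹ (f x) := by
  have hleft : LeftInverse (invFun f) f := leftInverse_invFun hf.injective
  have hmono : StrictMonoOn (invFun f) (range f) := by
    rintro _ ⟨a, rfl⟩ _ ⟨b, rfl⟩ hab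
    rw [hleft a, hleft b]
    exact hf.lt_iff_lt.1 hab
  have hcont : ContinuousAt (invFun f) (f x) := by
    refine hmono.continuousAt_of_image_mem_nhds hrange ?_
    rw [← image_univ, hleft.image_image]
    exact univ_mem
  refine HasDerivAt.of_local_left_inverse hcont (by rwa [hleft x]) hf' ?_
  filter_upwards [hrange] with y hy
  exact invFun_eq hy

lemma stdGaussCDF_mem_Ioo (x : ℝ) : stdGaussCDF x ∈ Ioo 0 1 :=
  range_stdGaussCDF ▸ mem_range_self x

lemma range_stdGaussCDF_mem_nhds (x : ℝ) : range stdGaussCDF ∈ 𝓝 (stdGaussCDF x) := by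
  rw [range_stdGaussCDF]
  exact isOpen_Ioo.mem_nhds (stdGaussCDF_mem_Ioo x)

lemma invFun_stdGaussCDF (x : ℝ) : invFun stdGaussCDF (stdGaussCDF x) = x :=
  leftInverse_invFun strictMono_stdGaussCDF.injective x

lemma hasDerivAt_invFun_stdGaussCDF (x : ℝ) :
    HasDerivAt (invFun stdGaussCDF) (stdGaussPDF x)⁻¹ (stdGaussCDF x) :=
  strictMono_stdGaussCDF.hasDerivAt_invFun (hasDerivAt_stdGaussCDF x) (stdGaussPDF_pos x).ne'
    (range_stdGaussCDF_mem_nhds x)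

lemma gaussI_nonneg (p : ℝ) : 0 ≤ gaussI p := by
  unfold gaussI
  split_ifs <;> positivity

lemma gaussI_stdGaussCDF (x : ℝ) : gaussI (stdGaussCDF x) = stdGaussPDF x := by
  obtain ⟨h0, h1⟩ := stdGaussCDF_mem_Ioo x
  rw [gaussI, if_neg (by rintro (h | h) <;> linarith), invFun_stdGaussCDF]
  rfl

lemma hasDerivAt_gaussI_stdGaussCDF (x : ℝ) : HasDerivAt gaussI (-x) (stdGaussCDF x) := by
  have hcomp : HasDerivAt (stdGaussPDF ∘ invFun stdGaussCDF)
      (-x * stdGaussPDF x * (stdGaussPDF x)⁻¹) (stdGaussCDF x) := by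
    refine HasDerivAt.comp _ ?_ (hasDerivAt_invFun_stdGaussCDF x)
    rw [invFun_stdGaussCDF]
    exact hasDerivAt_stdGaussPDF x
  rw [mul_inv_cancel_right₀ (stdGaussPDF_pos x).ne'] at hcomp
  refine hcomp.congr_of_eventuallyEq ?_
  filter_upwards [range_stdGaussCDF_mem_nhds x] with p hp
  obtain ⟨y, rfl⟩ := hp
  rw [comp_apply, invFun_stdGaussCDF, gaussI_stdGaussCDF]

lemma deriv_deriv_gaussI_stdGaussCDF (x : ℝ) :
    deriv (deriv gaussI) (stdGaussCDF x) = -(stdGaussPDF x)⁻¹ := by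
  refine ((hasDerivAt_invFun_stdGaussCDF x).neg.congr_of_eventuallyEq ?_).deriv
  filter_upwards [range_stdGaussCDF_mem_nhds x] with p hp
  obtain ⟨y, rfl⟩ := hp
  rw [Pi.neg_apply, (hasDerivAt_gaussI_stdGaussCDF y).deriv, invFun_stdGaussCDF]

/-- For every `c > 0` there exist `a, b ∈ (0,1)` with
`I(b) − I(a) − I′(b)(b − a) + (c/2) I″(b)(a − b)² < 0`: the two-point inequality
`I(b) − I(a) − I′(b)(b − a) ≥ (c/2)(−I″(b))(a − b)²` fails on `(0,1)` for every
`c > 0`. -/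
theorem two_point_inequality_fails (c : ℝ) (hc : 0 < c) :
    ∃ a ∈ Set.Ioo (0 : ℝ) 1, ∃ b ∈ Set.Ioo (0 : ℝ) 1,
      gaussI b - gaussI a - deriv gaussI b * (b - a)
        + c / 2 * deriv (deriv gaussI) b * (a - b) ^ 2 < 0 := by
  obtain ⟨t, ht, hb, hdecay⟩ :
      ∃ t : ℝ, 2 ≤ t ∧ 3 / 4 ≤ stdGaussCDF t ∧ t * stdGaussPDF t < c / 32 :=
    ((eventually_ge_atTop 2).and
      ((tendsto_stdGaussCDF_atTop.eventually (eventually_ge_nhds (by norm_num))).and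
        (tendsto_mul_stdGaussPDF_atTop.eventually (eventually_lt_nhds (by positivity))))).exists
  refine ⟨1 / 2, by norm_num, stdGaussCDF t, stdGaussCDF_mem_Ioo t, ?_⟩
  rw [gaussI_stdGaussCDF, (hasDerivAt_gaussI_stdGaussCDF t).deriv, deriv_deriv_gaussI_stdGaussCDF]
  set b := stdGaussCDF t
  set p := stdGaussPDF t
  have hp : 0 < p := stdGaussPDF_pos t
  have hb1 : b < 1 := (stdGaussCDF_mem_Ioo t).2
  have hlinear : p - gaussI (1 / 2) - -t * (b - 1 / 2) ≤ t := by
    nlinarith [gaussI_nonneg (1 / 2), stdGaussPDF_le_one t]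
  have hquad : t < c / 2 * p⁻¹ * (1 / 2 - b) ^ 2 := by
    calc t < c / 32 * p⁻¹ := by rwa [← div_eq_mul_inv, lt_div_iff₀ hp]
      _ = c / 2 * p⁻¹ * (1 / 16) := by ring
      _ ≤ c / 2 * p⁻¹ * (1 / 2 - b) ^ 2 := by gcongr; nlinarith
  linarith
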